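/- Let V be a finite-dimensional real normed vector space of dimension n ≥ 1 and let w₁, …, wₙ be a basis of V. Then there exist ε > 0 and functions Γ₁, …, Γ₂ₙ : V → ℝ, each smooth on the open ball B_ε(0) = {X ∈ V : ‖X‖ < ε} and strictly positive there, such that every X ∈ B_ε(0) satisfies X = Σ_{i=1}^{n} Γᵢ(X)² wᵢ − Σ_{i=1}^{n} Γ_{n+i}(X)² wᵢ. -/

import Mathlib

open scoped BigOperators

/-- Given a basis `w₁, …, wₙ` of a finite-dimensional real normed vector space `V`
(`n ≥ 1`), there are `ε > 0` and functions `Γ₁, …, Γ₂ₙ : V → ℝ` (written here as two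
families `Γ, Γ' : Fin n → V → ℝ`), each smooth and strictly positive on the open ball
`B_ε(0)`, such that every `X` with `‖X‖ < ε` satisfies
`X = Σ_{i} Γᵢ(X)² wᵢ − Σ_{i} Γ_{n+i}(X)² wᵢ`. -/
theorem basis_positive_smooth_decomposition
    (V : Type*) [NormedAddCommGroup V] [NormedSpace ℝ V] [FiniteDimensional ℝ V]
    (n : ℕ) (hn : 1 ≤ n) (hdim : Module.finrank ℝ V = n)
    (w : Fin n → V) (hli : LinearIndependent ℝ w)
    (hsp : Submodule.span ℝ (Set.range w) = ⊤) :
    ∃ (ε : ℝ) (Γ Γ' : Fin n → V → ℝ),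
      0 < ε ∧
      (∀ i, ContDiffOn ℝ (⊤ : ℕ∞) (Γ i) (Metric.ball (0 : V) ε)) ∧
      (∀ i, ContDiffOn ℝ (⊤ : ℕ∞) (Γ' i) (Metric.ball (0 : V) ε)) ∧
      (∀ i, ∀ X ∈ Metric.ball (0 : V) ε, 0 < Γ i X) ∧
      (∀ i, ∀ X ∈ Metric.ball (0 : V) ε, 0 < Γ' i X) ∧
      (∀ X ∈ Metric.ball (0 : V) ε,
        X = (∑ i, (Γ i X) ^ 2 • w i) - ∑ i, (Γ' i X) ^ 2 • w i) := by
  classical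
  set b : Module.Basis (Fin n) ℝ V := Module.Basis.mk hli (by rw [hsp])
  -- coordinate functionals as continuous linear maps
  set f : Fin n → V →L[ℝ] ℝ := fun i => LinearMap.toContinuousLinearMap (b.coord i)
  obtain ⟨C, hC0, hfC⟩ : ∃ C : ℝ, 0 < C ∧ ∀ i, ‖f i‖ ≤ C := by
    refine ⟨(∑ i, ‖f i‖) + 1, by positivity, fun i => ?_⟩
    have h : ‖f i‖ ≤ ∑ j, ‖f j‖ :=
      Finset.single_le_sum (fun j _ => norm_nonneg (f j)) (Finset.mem_univ i)
    linarith
  refine ⟨(2*C)⁻¹, fun i X => Real.sqrt (1 + f i X), fun _ _ => 1, by positivity, ?_, ?_, ?_, ?_, ?_⟩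
  · -- key bound
    have key : ∀ i, ∀ X ∈ Metric.ball (0:V) (2*C)⁻¹, (0:ℝ) < 1 + f i X := by
      intro i X hX
      simp only [Metric.mem_ball, dist_zero_right] at hX
      have h1 : |f i X| ≤ ‖f i‖ * ‖X‖ := (f i).le_opNorm X
      have h2 : ‖f i‖ * ‖X‖ ≤ C * (2*C)⁻¹ :=
        mul_le_mul (hfC i) hX.le (norm_nonneg _) hC0.le
      have : C * (2*C)⁻¹ = 1/2 := by field_simp
      have := abs_le.mp (h1.trans (h2.trans_eq this))
      linarith [this.1]
    intro i
    intro X hX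
    have hpos : (0:ℝ) < 1 + f i X := key i X hX
    have : ContDiffAt ℝ (⊤ : ℕ∞) (fun X => Real.sqrt (1 + f i X)) X := by
      have h1 : ContDiffAt ℝ (⊤ : ℕ∞) (fun X : V => 1 + f i X) X :=
        (contDiffAt_const.add (f i).contDiff.contDiffAt)
      exact (Real.contDiffAt_sqrt hpos.ne').comp X h1
    exact this.contDiffWithinAt
  · intro i; exact contDiffOn_const
  · intro i X hX
    simp only [Metric.mem_ball, dist_zero_right] at hX
    have h1 : |f i X| ≤ ‖f i‖ * ‖X‖ := (f i).le_opNorm X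
    have h2 : ‖f i‖ * ‖X‖ ≤ C * (2*C)⁻¹ :=
      mul_le_mul (hfC i) hX.le (norm_nonneg _) hC0.le
    have h3 : C * (2*C)⁻¹ = 1/2 := by field_simp
    have h4 := abs_le.mp (h1.trans (h2.trans_eq h3))
    have : (0:ℝ) < 1 + f i X := by linarith [h4.1]
    exact Real.sqrt_pos.mpr this
  · intro i X hX; norm_num
  · intro X hX
    simp only [Metric.mem_ball, dist_zero_right] at hX
    have hpos : ∀ i, (0:ℝ) ≤ 1 + f i X := by
      intro i
      have h1 : |f i X| ≤ ‖f i‖ * ‖X‖ := (f i).le_opNorm X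
      have h2 : ‖f i‖ * ‖X‖ ≤ C * (2*C)⁻¹ :=
        mul_le_mul (hfC i) hX.le (norm_nonneg _) hC0.le
      have h3 : C * (2*C)⁻¹ = 1/2 := by field_simp
      have h4 := abs_le.mp (h1.trans (h2.trans_eq h3))
      linarith [h4.1]
    have hsq : ∀ i, (Real.sqrt (1 + f i X)) ^ 2 = 1 + f i X := fun i =>
      Real.sq_sqrt (hpos i)
    have hrepr : X = ∑ i, (f i X) • w i := by
      have : X = ∑ i, (b.repr X i) • b i := (b.sum_repr X).symm
      simpa [f, b, Module.Basis.coord_apply, Module.Basis.mk_apply] using this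
    simp only [hsq, one_pow, one_smul, add_smul]
    rw [Finset.sum_add_distrib]
    rw [add_sub_cancel_left]
    exact hrepr
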